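/- arXiv:1709.01579 — 11 statements merged into one kernel-verified Lean document; each statement's English description precedes it below -/
import Mathlib

section
/- For a self-map g : A → A, the following are equivalent: (1) there exists N ≥ 1 such that every subset of A totally preordered by ≤_g has at most N elements; (2) sup over x ∈ A of the orbit cardinality |{gⁿ(x) : n ≥ 0}| is finite; (3) g is quasi-periodic. -/
section Aux

variable {A : Type*} (g : A → A)

private lemma iter_trans {x y z : A} (h1 : ∃ n, g^[n] x = y) (h2 : ∃ n, g^[n] y = z) :
    ∃ n, g^[n] x = z := by
  obtain ⟨n, rfl⟩ := h1; obtain ⟨m, rfl⟩ := h2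
  exact ⟨m + n, Function.iterate_add_apply g m n x⟩

/-- A nonempty finite totally preordered set has a bottom element. -/
private lemma exists_bot (t : Finset A) (ht : t.Nonempty)
    (h : ∀ x ∈ t, ∀ y ∈ t, (∃ n, g^[n] x = y) ∨ (∃ n, g^[n] y = x)) :
    ∃ x ∈ t, ∀ y ∈ t, ∃ n, g^[n] x = y := by
  classical
  induction t using Finset.induction_on with
  | empty => simp at ht
  | @insert a s ha ih =>
    rcases s.eq_empty_or_nonempty with rfl | hs
    · refine ⟨a, by simp, ?_⟩
      intro y hy
      simp only [Finset.mem_insert, Finset.notMem_empty, or_false] at hy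
      exact ⟨0, hy.symm⟩
    · obtain ⟨b, hb, hbot⟩ := ih hs (fun x hx y hy => h x (by simp [hx]) y (by simp [hy]))
      rcases h a (by simp) b (by simp [hb]) with hab | hba
      · refine ⟨a, by simp, ?_⟩
        intro y hy
        rcases Finset.mem_insert.1 hy with rfl | hy
        · exact ⟨0, rfl⟩
        · exact iter_trans g hab (hbot y hy)
      · refine ⟨b, by simp [hb], ?_⟩
        intro y hy
        rcases Finset.mem_insert.1 hy with rfl | hy
        · exact hba
        · exact hbot y hy

private lemma periodic_step {x : A} {i j : ℕ} (hij : i < j) (hx : g^[i] x = g^[j] x) :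
    ∀ k, i ≤ k → ∀ q, g^[k + (j - i) * q] x = g^[k] x := by
  have step : ∀ k, i ≤ k → g^[k + (j - i)] x = g^[k] x := by
    intro k hk
    have h1 : k + (j - i) = (k - i) + j := by omega
    have h2 : k = (k - i) + i := by omega
    rw [h1, Function.iterate_add_apply, ← hx, ← Function.iterate_add_apply, ← h2]
  intro k hk q
  induction q with
  | zero => simp
  | succ q ihq =>
    have he : k + (j - i) * (q + 1) = (k + (j - i) * q) + (j - i) := by ring
    rw [he, step _ (le_trans hk (Nat.le_add_right _ _)), ihq]

private lemma reduce {n m : ℕ} (hnm : g^[n] = g^[m]) (hmn : m < n) :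
    ∀ k, ∃ k' < n, g^[k'] = g^[k] := by
  intro k
  induction k using Nat.strong_induction_on with
  | _ k ih =>
    by_cases hk : k < n
    · exact ⟨k, hk, rfl⟩
    · push_neg at hk
      obtain ⟨k', hk', he⟩ := ih (k - n + m) (by omega)
      refine ⟨k', hk', ?_⟩
      rw [he]
      conv_rhs => rw [show k = (k - n) + n by omega]
      rw [Function.iterate_add g (k - n) n, hnm, ← Function.iterate_add]

end Aux

/-- Equivalence of boundedness of totally preordered subsets (w.r.t. `≤_g`),
boundedness of orbit cardinalities, and quasi-periodicity of `g`. -/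
theorem bounded_iff_orbitBounded_iff_quasiPeriodic {A : Type*} (g : A → A) :
    ((∃ N : ℕ, 1 ≤ N ∧ ∀ I : Set A,
        (∀ x ∈ I, ∀ y ∈ I, (∃ n : ℕ, g^[n] x = y) ∨ (∃ n : ℕ, g^[n] y = x)) →
        I.Finite ∧ I.ncard ≤ N) ↔
      (∃ N : ℕ, ∀ x : A, (Set.range fun n : ℕ => g^[n] x).Finite ∧
        (Set.range fun n : ℕ => g^[n] x).ncard ≤ N)) ∧
    ((∃ N : ℕ, ∀ x : A, (Set.range fun n : ℕ => g^[n] x).Finite ∧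
        (Set.range fun n : ℕ => g^[n] x).ncard ≤ N) ↔
      (∃ n m : ℕ, 1 ≤ m ∧ m < n ∧ g^[n] = g^[m])) := by
  classical
  -- orbits are totally preordered
  have horb : ∀ x : A, ∀ y ∈ (Set.range fun n : ℕ => g^[n] x),
      ∀ z ∈ (Set.range fun n : ℕ => g^[n] x),
      (∃ n : ℕ, g^[n] y = z) ∨ (∃ n : ℕ, g^[n] z = y) := by
    intro x y hy z hz
    obtain ⟨a, rfl⟩ := hy
    obtain ⟨b, rfl⟩ := hz
    rcases le_total a b with hab | hab
    · exact Or.inl ⟨b - a, by rw [← Function.iterate_add_apply]; congr 1; omega⟩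
    · exact Or.inr ⟨a - b, by rw [← Function.iterate_add_apply]; congr 1; omega⟩
  have h12 : (∃ N : ℕ, 1 ≤ N ∧ ∀ I : Set A,
        (∀ x ∈ I, ∀ y ∈ I, (∃ n : ℕ, g^[n] x = y) ∨ (∃ n : ℕ, g^[n] y = x)) →
        I.Finite ∧ I.ncard ≤ N) →
      (∃ N : ℕ, ∀ x : A, (Set.range fun n : ℕ => g^[n] x).Finite ∧
        (Set.range fun n : ℕ => g^[n] x).ncard ≤ N) := by
    rintro ⟨N, -, hN⟩
    exact ⟨N, fun x => hN _ (horb x)⟩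
  have h21 : (∃ N : ℕ, ∀ x : A, (Set.range fun n : ℕ => g^[n] x).Finite ∧
        (Set.range fun n : ℕ => g^[n] x).ncard ≤ N) →
      (∃ N : ℕ, 1 ≤ N ∧ ∀ I : Set A,
        (∀ x ∈ I, ∀ y ∈ I, (∃ n : ℕ, g^[n] x = y) ∨ (∃ n : ℕ, g^[n] y = x)) →
        I.Finite ∧ I.ncard ≤ N) := by
    rintro ⟨N, hN⟩
    refine ⟨max N 1, le_max_right _ _, fun I hI => ?_⟩
    -- any finite subset of I has card ≤ N
    have key : ∀ t : Finset A, ↑t ⊆ I → t.card ≤ N := by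
      intro t hts
      rcases t.eq_empty_or_nonempty with rfl | htne
      · simp
      · obtain ⟨x, hx, hbot⟩ := exists_bot g t htne
          (fun a ha b hb => hI a (hts ha) b (hts hb))
        have hsub : ↑t ⊆ (Set.range fun n : ℕ => g^[n] x) := by
          intro y hy
          obtain ⟨n, hn⟩ := hbot y hy
          exact ⟨n, hn⟩
        calc t.card = (↑t : Set A).ncard := (Set.ncard_coe_finset t).symm
          _ ≤ (Set.range fun n : ℕ => g^[n] x).ncard :=
              Set.ncard_le_ncard hsub (hN x).1
          _ ≤ N := (hN x).2
    have hfin : I.Finite := by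
      by_contra hinf
      have hinf' : I.Infinite := hinf
      obtain ⟨t, hts, htc⟩ := hinf'.exists_subset_card_eq (N + 1)
      have := key t hts
      omega
    refine ⟨hfin, ?_⟩
    have hle : I.ncard ≤ N := by
      rw [Set.ncard_eq_toFinset_card I hfin]
      exact key _ (by simp)
    exact hle.trans (le_max_left _ _)
  have h23 : (∃ N : ℕ, ∀ x : A, (Set.range fun n : ℕ => g^[n] x).Finite ∧
        (Set.range fun n : ℕ => g^[n] x).ncard ≤ N) →
      (∃ n m : ℕ, 1 ≤ m ∧ m < n ∧ g^[n] = g^[m]) := by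
    rintro ⟨N, hN⟩
    set M := max N 1 with hM
    refine ⟨M + M.factorial, M, le_max_right _ _,
      Nat.lt_add_of_pos_right M.factorial_pos, ?_⟩
    funext x
    -- pigeonhole: among g^[0] x, ..., g^[M] x two coincide
    obtain ⟨hfin, hcard⟩ := hN x
    have hmaps : ∀ k ∈ Finset.range (M + 1), g^[k] x ∈ hfin.toFinset := by
      intro k _
      simp only [Set.Finite.mem_toFinset]
      exact ⟨k, rfl⟩
    have hlt : hfin.toFinset.card < (Finset.range (M + 1)).card := by
      rw [Finset.card_range]
      have : hfin.toFinset.card = (Set.range fun n : ℕ => g^[n] x).ncard :=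
        (Set.ncard_eq_toFinset_card _ hfin).symm
      omega
    obtain ⟨i, hi, j, hj, hij, hijx⟩ :=
      Finset.exists_ne_map_eq_of_card_lt_of_maps_to hlt hmaps
    simp only [Finset.mem_range] at hi hj
    -- wlog i < j
    obtain ⟨i, j, hlt', hx⟩ : ∃ i j : ℕ, i < j ∧ j ≤ M ∧ g^[i] x = g^[j] x := by
      rcases lt_or_gt_of_ne hij with h | h
      · exact ⟨i, j, h, by omega, hijx⟩
      · exact ⟨j, i, h, by omega, hijx.symm⟩
    obtain ⟨hjM, hx⟩ := hx
    have hp1 : 1 ≤ j - i := by omega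
    have hdvd : (j - i) ∣ M.factorial := Nat.dvd_factorial (by omega) (by omega)
    obtain ⟨q, hq⟩ := hdvd
    rw [hq]
    exact periodic_step g hlt' hx M (by omega) q
  have h32 : (∃ n m : ℕ, 1 ≤ m ∧ m < n ∧ g^[n] = g^[m]) →
      (∃ N : ℕ, ∀ x : A, (Set.range fun n : ℕ => g^[n] x).Finite ∧
        (Set.range fun n : ℕ => g^[n] x).ncard ≤ N) := by
    rintro ⟨n, m, _, hmn, hnm⟩
    refine ⟨n, fun x => ?_⟩
    have hsub : (Set.range fun k : ℕ => g^[k] x) ⊆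
        ↑((Finset.range n).image fun k => g^[k] x) := by
      rintro y ⟨k, rfl⟩
      obtain ⟨k', hk', he⟩ := reduce g hnm hmn k
      simp only [Finset.coe_image, Set.mem_image, Finset.mem_coe, Finset.mem_range]
      exact ⟨k', hk', by rw [he]⟩
    have hfin : (Set.range fun k : ℕ => g^[k] x).Finite :=
      Set.Finite.subset (Finset.finite_toSet _) hsub
    refine ⟨hfin, ?_⟩
    calc (Set.range fun k : ℕ => g^[k] x).ncard
        ≤ (↑((Finset.range n).image fun k => g^[k] x) : Set A).ncard :=
          Set.ncard_le_ncard hsub (Finset.finite_toSet _)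
      _ = ((Finset.range n).image fun k => g^[k] x).card := Set.ncard_coe_finset _
      _ ≤ n := le_trans Finset.card_image_le (by simp)
  exact ⟨⟨h12, h21⟩, ⟨h23, h32⟩⟩
end

section
/- Let X have at least two elements, Γ be nonempty, and φ : Γ → Γ. If φ has a wandering point (a point θ with infinite orbit {φⁿ(θ) : n ≥ 0}), then the generalized shift σ_φ : X^Γ → X^Γ also has a wandering point, i.e., there exists x ∈ X^Γ whose σ_φ-orbit is infinite. -/
/-- If `φ` has a wandering point, then the generalized shift `σ_φ` has a wandering point. -/
theorem genShift_wandering {X Γ : Type*} [Nontrivial X] [Nonempty Γ] (φ : Γ → Γ)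
    (θ : Γ) (hθ : (Set.range fun n : ℕ => φ^[n] θ).Infinite) :
    ∃ x : Γ → X, (Set.range fun n : ℕ => (fun y : Γ → X => y ∘ φ)^[n] x).Infinite := by
  classical
  set f : ℕ → Γ := fun n => φ^[n] θ with hf
  -- f is injective
  have hinj : Function.Injective f := by
    by_contra h
    simp only [Function.Injective, not_forall] at h
    obtain ⟨a, b, hab, hne⟩ := h
    wlog hlt : a < b generalizing a b
    · exact this b a hab.symm (Ne.symm hne) (lt_of_le_of_ne (not_lt.mp hlt) (Ne.symm hne))
    -- then range f ⊆ f '' {i | i < b}, finite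
    have key : ∀ n, f n ∈ f '' {i | i < b} := by
      intro n
      induction n using Nat.strong_induction_on with
      | _ n ih =>
        by_cases hn : n < b
        · exact ⟨n, hn, rfl⟩
        · push_neg at hn
          have h1 : f n = f (n - b + a) := by
            have h2 : n = (n - b) + b := (Nat.sub_add_cancel hn).symm
            calc f n = φ^[n - b] (f b) := by
                  rw [hf]; simp only; rw [← Function.iterate_add_apply, ← h2]
              _ = φ^[n - b] (f a) := by rw [hab]
              _ = f (n - b + a) := by
                  rw [hf]; simp only; rw [← Function.iterate_add_apply]
          have hlt2 : n - b + a < n := by omega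
          rw [h1]; exact ih _ hlt2
    have : (Set.range f).Finite := by
      have : Set.range f ⊆ f '' {i | i < b} := by rintro _ ⟨n, rfl⟩; exact key n
      exact Set.Finite.subset ((Set.finite_Iio b).image f) this
    exact hθ this
  obtain ⟨a, b, hab⟩ := exists_pair_ne X
  -- x is a along square-index orbit points, b elsewhere
  set x : Γ → X := fun α => if ∃ n : ℕ, f (n * n) = α then a else b with hx
  have hs : ∀ j : ℕ, x (f j) = if ∃ n : ℕ, j = n * n then a else b := by
    intro j
    by_cases hj : ∃ n : ℕ, j = n * n
    · obtain ⟨n, rfl⟩ := hj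
      rw [if_pos ⟨n, rfl⟩, hx]
      exact if_pos ⟨n, rfl⟩
    · rw [if_neg hj, hx]
      simp only
      rw [if_neg]
      rintro ⟨n, hn⟩
      exact hj ⟨n, (hinj hn).symm⟩
  -- the iterate of the shift
  have hiter : ∀ n : ℕ, (fun y : Γ → X => y ∘ φ)^[n] x = x ∘ φ^[n] := by
    intro n
    induction n with
    | zero => rfl
    | succ n ih =>
      rw [Function.iterate_succ_apply', ih, Function.iterate_succ]
      rfl
  refine ⟨x, ?_⟩
  have hkey : ∀ m n : ℕ, m < n → x ∘ φ^[m] = x ∘ φ^[n] → False := by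
    intro m n hlt hmn
    set d := n - m with hd
    have hd1 : 1 ≤ d := by omega
    have hper : ∀ k : ℕ, x (f (m + k)) = x (f (n + k)) := by
      intro k
      have := congrFun hmn (φ^[k] θ)
      simpa [hf, Function.comp, ← Function.iterate_add_apply, Nat.add_comm] using this
    set p := m + d with hp
    have h1 : x (f (p * p)) = a := by
      rw [hs]; exact if_pos ⟨p, rfl⟩
    have h2 : x (f (p * p + d)) = b := by
      rw [hs]
      apply if_neg
      rintro ⟨q, hq⟩
      have hpq : p * p < q * q := by omega
      have hq1 : p + 1 ≤ q := Nat.mul_self_lt_mul_self_iff.mp hpq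
      have hq2 : (p + 1) * (p + 1) ≤ q * q := Nat.mul_le_mul hq1 hq1
      have hdp : d ≤ p := by omega
      have h5 : p * p + 2 * p + 1 ≤ p * p + d := by
        calc p * p + 2 * p + 1 = (p + 1) * (p + 1) := by ring
          _ ≤ q * q := hq2
          _ = p * p + d := hq.symm
      linarith
    have h3 : x (f (p * p + d)) = a := by
      have hk : p * p ≥ m := le_trans (by omega) (Nat.le_mul_of_pos_left p (by omega))
      have := hper (p * p - m)
      rw [show m + (p * p - m) = p * p by omega, show n + (p * p - m) = p * p + d by omega] at this
      rw [← this, h1]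
    exact hab (h3 ▸ h2.symm ▸ rfl)
  have hginj : Function.Injective fun n : ℕ => (fun y : Γ → X => y ∘ φ)^[n] x := by
    intro m n hmn
    simp only [hiter] at hmn
    rcases lt_trichotomy m n with h | h | h
    · exact absurd hmn (fun hh => hkey m n h hh)
    · exact h
    · exact absurd hmn.symm (fun hh => hkey n m h hh)
  exact Set.infinite_range_of_injective hginj
end

section
/- Let X have at least two elements and φ : Γ → Γ have a point θ with infinite orbit. Then the infinite orbit number of σ_φ is infinite: for every k ≥ 1 there exist k points of X^Γ whose σ_φ-orbit sequences (σ_φⁿ(xⁱ))_{n≥1} are injective and pairwise disjoint. -/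
private def gsf (k i r : ℕ) : ℕ := (r+1)^2 * (k+1) + (r+1) * i

private lemma gsf_strictMono (k i : ℕ) : StrictMono (gsf k i) := by
  apply strictMono_nat_of_lt_succ
  intro r
  unfold gsf
  have h0 : (r+1)^2 < (r+2)^2 := Nat.pow_lt_pow_left (by omega) (by omega)
  have h1 : (r+1)^2 * (k+1) < (r+2)^2 * (k+1) :=
    Nat.mul_lt_mul_of_lt_of_le h0 le_rfl (Nat.succ_pos k)
  have h2 : (r+1) * i ≤ (r+2) * i := by nlinarith
  calc (r+1)^2 * (k+1) + (r+1) * i < (r+2)^2 * (k+1) + (r+2) * i := by omega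
    _ = (r+1+1)^2 * (k+1) + (r+1+1) * i := by ring_nf

private lemma gsf_ge (k i r : ℕ) : r ≤ gsf k i r := by
  unfold gsf
  nlinarith [sq_nonneg (r+1)]

private lemma gsf_key (k i j N M : ℕ) (hi : i < k + 1) (hj : j < k + 1) (hNM : N ≤ M)
    (H : ∀ t : ℕ, (∃ r, N + t = gsf k i r) ↔ (∃ r, M + t = gsf k j r)) :
    i = j ∧ N = M := by
  set d := M - N with hd
  have hM : M = N + d := by omega
  have H' : ∀ s, N ≤ s → ((∃ r, s = gsf k i r) ↔ (∃ r, s + d = gsf k j r)) := by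
    intro s hs
    have := H (s - N)
    have e1 : N + (s - N) = s := by omega
    have e2 : M + (s - N) = s + d := by omega
    rw [e1, e2] at this
    exact this
  have hmono : gsf k i N < gsf k i (N+1) := (gsf_strictMono k i) (by omega)
  have hge : N ≤ gsf k i N := gsf_ge k i N
  have hge1 : N ≤ gsf k i (N+1) := by omega
  obtain ⟨r₁, hr₁⟩ := (H' (gsf k i N) hge).mp ⟨N, rfl⟩
  obtain ⟨r₂, hr₂⟩ := (H' (gsf k i (N+1)) hge1).mp ⟨N+1, rfl⟩
  have hlt : gsf k j r₁ < gsf k j r₂ := by omega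
  have hr12 : r₁ < r₂ := (gsf_strictMono k j).lt_iff_lt.mp hlt
  have hr2le : r₂ ≤ r₁ + 1 := by
    by_contra hcon
    push_neg at hcon
    have hb1 : gsf k j r₁ < gsf k j (r₁+1) := (gsf_strictMono k j) (by omega)
    have hb2 : gsf k j (r₁+1) < gsf k j r₂ := (gsf_strictMono k j) hcon
    set s := gsf k j (r₁+1) - d with hs
    have hsd : s + d = gsf k j (r₁+1) := by omega
    have hsN : N ≤ s := by omega
    obtain ⟨u, hu⟩ := (H' s hsN).mpr ⟨r₁+1, hsd⟩
    have h3 : gsf k i N < gsf k i u := by omega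
    have h4 : gsf k i u < gsf k i (N+1) := by omega
    have hu1 : N < u := (gsf_strictMono k i).lt_iff_lt.mp h3
    have hu2 : u < N + 1 := (gsf_strictMono k i).lt_iff_lt.mp h4
    omega
  have hr2 : r₂ = r₁ + 1 := by omega
  subst hr2
  have hsum : gsf k j (r₁+1) + gsf k i N = gsf k i (N+1) + gsf k j r₁ := by omega
  have hgap : (k+1) * (2*r₁+3) + j = (k+1) * (2*N+3) + i := by
    have hz : ((k:ℤ)+1) * (2*(r₁:ℤ)+3) + (j:ℤ) = ((k:ℤ)+1) * (2*(N:ℤ)+3) + (i:ℤ) := by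
      have hzc : ((gsf k j (r₁+1) : ℤ) + (gsf k i N : ℤ)) = ((gsf k i (N+1) : ℤ) + (gsf k j r₁ : ℤ)) := by
        exact_mod_cast congrArg (Nat.cast : ℕ → ℤ) hsum
      unfold gsf at hzc
      push_cast at hzc
      linear_combination hzc
    exact_mod_cast hz
  have hmod : j = i := by
    have h5 : j % (k+1) = i % (k+1) := by
      rw [← Nat.mul_add_mod (k+1) (2*r₁+3) j, ← Nat.mul_add_mod (k+1) (2*N+3) i, hgap]
    rwa [Nat.mod_eq_of_lt hj, Nat.mod_eq_of_lt hi] at h5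
  subst hmod
  have hmul : (k+1) * (2*r₁+3) = (k+1) * (2*N+3) := by omega
  have hrN : r₁ = N := by
    have := Nat.eq_of_mul_eq_mul_left (Nat.succ_pos k) hmul
    omega
  subst hrN
  exact ⟨rfl, by omega⟩

private lemma orbit_inj {Γ : Type*} (φ : Γ → Γ) (θ : Γ)
    (hθ : (Set.range fun n : ℕ => φ^[n] θ).Infinite) :
    Function.Injective fun n : ℕ => φ^[n] θ := by
  set e : ℕ → Γ := fun n => φ^[n] θ with he
  have key2 : ∀ a b : ℕ, a < b → e a = e b → (Set.range e).Finite := by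
    intro a b hab heq
    apply Set.Finite.subset ((Set.finite_Iio b).image e)
    rintro _ ⟨n, rfl⟩
    have H : ∀ n : ℕ, ∃ m, m < b ∧ e m = e n := by
      intro n
      induction n using Nat.strong_induction_on with
      | _ n ih =>
        rcases lt_or_ge n b with h | h
        · exact ⟨n, h, rfl⟩
        · have hstep : e n = e (n - b + a) := by
            have h1 : e n = e (n - b + b) := by rw [Nat.sub_add_cancel h]
            rw [h1]
            show φ^[n - b + b] θ = φ^[n - b + a] θ
            rw [Function.iterate_add_apply, Function.iterate_add_apply]
            exact congrArg _ heq.symm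
          have hlt : n - b + a < n := by omega
          obtain ⟨m, hm, hme⟩ := ih _ hlt
          exact ⟨m, hm, hme.trans hstep.symm⟩
    obtain ⟨m, hm, hme⟩ := H n
    exact ⟨m, hm, hme⟩
  intro a b hab
  by_contra hne
  rcases Ne.lt_or_gt hne with h | h
  · exact hθ (key2 a b h hab)
  · exact hθ (key2 b a h hab.symm)

/-- If `φ` has a point with infinite orbit, then for every `k` there are `k` points of `X^Γ`
whose `σ_φ`-orbit sequences `(σ_φ^[n] xⁱ)_{n ≥ 1}` are injective and pairwise disjoint. -/
theorem genShift_orbitNumber_infinite_of_wandering {X Γ : Type*} [Nontrivial X] (φ : Γ → Γ)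
    (θ : Γ) (hθ : (Set.range fun n : ℕ => φ^[n] θ).Infinite) :
    ∀ k : ℕ, 1 ≤ k → ∃ x : Fin k → (Γ → X),
      (∀ i, Function.Injective fun n : ℕ => (fun y : Γ → X => y ∘ φ)^[n + 1] (x i)) ∧
      ∀ i j, i ≠ j →
        Disjoint (Set.range fun n : ℕ => (fun y : Γ → X => y ∘ φ)^[n + 1] (x i))
          (Set.range fun n : ℕ => (fun y : Γ → X => y ∘ φ)^[n + 1] (x j)) := by
  classical
  intro k hk
  obtain ⟨a, b, hab⟩ := exists_pair_ne X
  set e : ℕ → Γ := fun n => φ^[n] θ with he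
  have einj : Function.Injective e := orbit_inj φ θ hθ
  -- the points
  set x : Fin k → (Γ → X) := fun i γ => if ∃ r, γ = e (gsf k i.val r) then b else a with hx
  -- iterate of the shift is composition with iterate
  have comp_iter : ∀ (n : ℕ) (y : Γ → X), (fun y : Γ → X => y ∘ φ)^[n] y = y ∘ φ^[n] := by
    intro n
    induction n with
    | zero => intro y; simp
    | succ n ih =>
      intro y
      rw [Function.iterate_succ_apply, ih]
      funext γ
      simp [Function.comp, Function.iterate_succ_apply']
  -- value of x i on the orbit
  have val : ∀ (i : Fin k) (s : ℕ), x i (e s) = if ∃ r, s = gsf k i.val r then b else a := by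
    intro i s
    simp only [hx]
    congr 1
    apply propext
    constructor
    · rintro ⟨r, hr⟩; exact ⟨r, einj hr⟩
    · rintro ⟨r, hr⟩; exact ⟨r, congrArg e hr⟩
  -- main step: equality of iterates forces equal indices and times
  have main : ∀ (i j : Fin k) (n m : ℕ),
      (fun y : Γ → X => y ∘ φ)^[n + 1] (x i) = (fun y : Γ → X => y ∘ φ)^[m + 1] (x j) →
      i = j ∧ n = m := by
    intro i j n m h
    have H : ∀ t : ℕ, (∃ r, n + 1 + t = gsf k i.val r) ↔ (∃ r, m + 1 + t = gsf k j.val r) := by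
      intro t
      have hc := congrFun h (e t)
      rw [comp_iter, comp_iter] at hc
      have h1 : (x i ∘ φ^[n+1]) (e t) = x i (e (n + 1 + t)) := by
        show x i (φ^[n+1] (φ^[t] θ)) = _
        rw [← Function.iterate_add_apply]
      have h2 : (x j ∘ φ^[m+1]) (e t) = x j (e (m + 1 + t)) := by
        show x j (φ^[m+1] (φ^[t] θ)) = _
        rw [← Function.iterate_add_apply]
      rw [h1, h2, val, val] at hc
      by_cases hP : ∃ r, n + 1 + t = gsf k i.val r <;>
        by_cases hQ : ∃ r, m + 1 + t = gsf k j.val r <;>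
        simp [hP, hQ] at hc ⊢ <;> tauto
    have hik : i.val < k + 1 := by omega
    have hjk : j.val < k + 1 := by omega
    rcases le_total (n+1) (m+1) with hle | hle
    · obtain ⟨hij, hnm⟩ := gsf_key k i.val j.val (n+1) (m+1) hik hjk hle H
      exact ⟨Fin.ext hij, by omega⟩
    · obtain ⟨hij, hnm⟩ := gsf_key k j.val i.val (m+1) (n+1) hjk hik hle
        (fun t => (H t).symm)
      exact ⟨(Fin.ext hij).symm, by omega⟩
  refine ⟨x, ?_, ?_⟩
  · intro i n m h
    exact (main i i n m h).2
  · intro i j hij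
    rw [Set.disjoint_left]
    rintro _ ⟨n, rfl⟩ ⟨m, hm⟩
    exact hij (main i j n m hm.symm).1
end

section
/- Let X have at least two elements and φ : Γ → Γ be a map such that every orbit of φ is finite but φ is not quasi-periodic (equivalently, the orbit cardinalities of φ are unbounded). Then the infinite orbit number of the generalized shift σ_φ : X^Γ → X^Γ is infinite. -/
/-!
Finite orbits make every point eventually periodic, and since `φ` is not quasi-periodic, either
the preperiods or the cycle lengths of `φ` are unbounded (otherwise `φ^[P! + T] = φ^[T]`). In
either case some set `S ⊆ Γ` has unbounded hitting time `τ`: the periodic points in the first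
case, a set meeting every cycle in exactly one point in the second. Before the hit, `τ` drops by
one at each step, so along a long such stretch of an orbit the colouring `F i` that marks the
levels `τ = 0` and `τ = i + 1` can be read back from `F i ∘ φ^[n]`: the first mark sits at
level `n` and the gap to the second is `i + 1`.
-/

open Function Set

section

variable {α X : Type*} {f : α → α}

theorem iterate_comp_right_apply (φ : α → α) (x : α → X) (n : ℕ) :
    (fun y : α → X => y ∘ φ)^[n] x = x ∘ φ^[n] := by
  induction n generalizing x with
  | zero => rfl
  | succ n ih => rw [iterate_succ_apply, ih, iterate_succ']; rfl

theorem exists_iterate_mem_periodicPts_of_finite_range {x : α}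
    (h : (range fun n => f^[n] x).Finite) : ∃ n, f^[n] x ∈ periodicPts f := by
  obtain ⟨m, n, hmn, heq⟩ := h.exists_lt_map_eq_of_forall_mem (f := fun n => f^[n] x)
    (fun n => mem_range_self n)
  refine ⟨m, mk_mem_periodicPts (n := n - m) (by omega) ?_⟩
  rw [IsPeriodicPt, IsFixedPt, ← iterate_add_apply, Nat.sub_add_cancel hmn.le]
  exact heq.symm

theorem iff_of_ite_eq_ite {a b : X} (hab : a ≠ b) {p q : Prop} [Decidable p] [Decidable q]
    (h : (if p then b else a) = if q then b else a) : p ↔ q := by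
  by_cases hp : p <;> by_cases hq : q <;> simp_all

/-- This is `0` also when the orbit of `x` never enters `S`, as `sInf ∅ = 0`. -/
noncomputable def hitTime (f : α → α) (S : Set α) (x : α) : ℕ := sInf {t | f^[t] x ∈ S}

theorem hitTime_iterate {S : Set α} {x : α} (hx : ∃ t, f^[t] x ∈ S) {s : ℕ}
    (hs : s ≤ hitTime f S x) : hitTime f S (f^[s] x) = hitTime f S x - s := by
  refine IsLeast.csInf_eq ⟨?_, fun t ht => ?_⟩
  · change f^[_] (f^[s] x) ∈ S
    rw [← iterate_add_apply, Nat.sub_add_cancel hs]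
    exact Nat.sInf_mem hx
  · have : hitTime f S x ≤ t + s :=
      Nat.sInf_le (show f^[t + s] x ∈ S by rwa [iterate_add_apply])
    omega

theorem exists_injective_iterate_comp_of_hitTime_unbounded [Nontrivial X] {S : Set α}
    (h : ∀ L, ∃ x, L ≤ hitTime f S x) :
    ∃ F : ℕ → α → X, Injective fun p : ℕ × ℕ => F p.1 ∘ f^[p.2] := by
  classical
  obtain ⟨a, b, hab⟩ := exists_pair_ne X
  refine ⟨fun i x => if hitTime f S x = 0 ∨ hitTime f S x = i + 1 then b else a, ?_⟩
  rintro ⟨i, n⟩ ⟨j, m⟩ hF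
  obtain ⟨x, hx⟩ := h (n + m + i + j + 1)
  have hit : ∃ t, f^[t] x ∈ S := Nat.nonempty_of_pos_sInf ((Nat.succ_pos _).trans_le hx)
  have level : ∀ v, n ≤ v → m ≤ v → v ≤ hitTime f S x →
      (v - n = 0 ∨ v - n = i + 1 ↔ v - m = 0 ∨ v - m = j + 1) := by
    intro v hn hm hv
    have := congrFun hF (f^[hitTime f S x - v] x)
    simp only [comp_apply, ← iterate_add_apply] at this
    rw [hitTime_iterate hit (by omega), hitTime_iterate hit (by omega)] at this
    have := iff_of_ite_eq_ite hab this
    omega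
  have h1 := level (max n m) (by omega) (by omega) (by omega)
  have h2 := level (max n m + i + 1) (by omega) (by omega) (by omega)
  have h3 := level (max n m + j + 1) (by omega) (by omega) (by omega)
  ext <;> dsimp only <;> omega

noncomputable def cycleRep (f : α → α) (x : α) : α :=
  haveI : Nonempty α := ⟨x⟩
  Classical.epsilon (· ∈ periodicOrbit f x)

theorem cycleRep_iterate {x : α} (hx : x ∈ periodicPts f) (n : ℕ) :
    cycleRep f (f^[n] x) = cycleRep f x := by
  rw [cycleRep, periodicOrbit_apply_iterate_eq hx, cycleRep]

theorem exists_iterate_eq_cycleRep {x : α} (hx : x ∈ periodicPts f) :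
    ∃ n, f^[n] x = cycleRep f x :=
  (mem_periodicOrbit_iff hx).1 (Classical.epsilon_spec ⟨x, self_mem_periodicOrbit hx⟩)

theorem hitTime_cycleRep_apply {x : α} (hx : x ∈ periodicPts f) (hrep : cycleRep f x = x) :
    hitTime f {y | cycleRep f y = y} (f x) = minimalPeriod f x - 1 := by
  have hpos := minimalPeriod_pos_of_mem_periodicPts hx
  refine IsLeast.csInf_eq ⟨?_, fun t ht => ?_⟩
  · change cycleRep f (f^[_] (f x)) = f^[_] (f x)
    rw [← iterate_succ_apply, Nat.succ_eq_add_one, Nat.sub_one_add_one hpos.ne',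
      iterate_minimalPeriod, hrep]
  · have hback : f^[t + 1] x = x := by
      change cycleRep f (f^[t] (f x)) = f^[t] (f x) at ht
      rwa [← iterate_succ_apply, cycleRep_iterate hx, hrep, eq_comm] at ht
    have := IsPeriodicPt.minimalPeriod_le t.succ_pos hback
    omega

theorem hitTime_cycleRep_unbounded (h : ∀ P, ∃ x ∈ periodicPts f, P ≤ minimalPeriod f x)
    (L : ℕ) :
    ∃ x, L ≤ hitTime f {y | cycleRep f y = y} x := by
  obtain ⟨x, hx, hP⟩ := h (L + 1)
  obtain ⟨n, hn⟩ := exists_iterate_eq_cycleRep hx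
  have hθ : f^[n] x ∈ periodicPts f := by
    rw [← minimalPeriod_pos_iff_mem_periodicPts, minimalPeriod_apply_iterate hx]
    exact minimalPeriod_pos_of_mem_periodicPts hx
  refine ⟨f (f^[n] x), ?_⟩
  rw [hitTime_cycleRep_apply hθ (by rw [cycleRep_iterate hx, hn]), minimalPeriod_apply_iterate hx]
  omega

theorem iterate_factorial_add_eq {T P : ℕ} (hev : ∀ x, ∃ t, f^[t] x ∈ periodicPts f)
    (hT : ∀ x, hitTime f (periodicPts f) x ≤ T)
    (hP : ∀ x ∈ periodicPts f, minimalPeriod f x ≤ P) : f^[P.factorial + T] = f^[T] := by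
  funext x
  have hper : f^[T] x ∈ periodicPts f := by
    rw [← Nat.sub_add_cancel (hT x), iterate_add_apply]
    exact (bijOn_periodicPts f).mapsTo.iterate _ (Nat.sInf_mem (hev x))
  rw [iterate_add_apply]
  exact (isPeriodicPt_iff_minimalPeriod_dvd.2
    (Nat.dvd_factorial (minimalPeriod_pos_of_mem_periodicPts hper) (hP _ hper))).eq

end

/-- If every orbit of `φ` is finite but `φ` is not quasi-periodic, then the infinite orbit
number of the generalized shift `σ_φ` is infinite. -/
theorem genShift_orbitNumber_infinite_of_unbounded {X Γ : Type*} [Nontrivial X] (φ : Γ → Γ)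
    (hfin : ∀ θ : Γ, (Set.range fun n : ℕ => φ^[n] θ).Finite)
    (hnqp : ¬ ∃ n m : ℕ, 1 ≤ m ∧ m < n ∧ φ^[n] = φ^[m]) :
    ∀ k : ℕ, 1 ≤ k → ∃ x : Fin k → (Γ → X),
      (∀ i, Function.Injective fun n : ℕ => (fun y : Γ → X => y ∘ φ)^[n + 1] (x i)) ∧
      ∀ i j, i ≠ j →
        Disjoint (Set.range fun n : ℕ => (fun y : Γ → X => y ∘ φ)^[n + 1] (x i))
          (Set.range fun n : ℕ => (fun y : Γ → X => y ∘ φ)^[n + 1] (x j)) := by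
  intro k _
  obtain ⟨F, hF⟩ : ∃ F : ℕ → Γ → X, Injective fun p : ℕ × ℕ => F p.1 ∘ φ^[p.2] := by
    by_cases hper : ∀ P, ∃ x ∈ periodicPts φ, P ≤ minimalPeriod φ x
    · exact exists_injective_iterate_comp_of_hitTime_unbounded (hitTime_cycleRep_unbounded hper)
    · push Not at hper
      obtain ⟨P, hP⟩ := hper
      refine exists_injective_iterate_comp_of_hitTime_unbounded (S := periodicPts φ) fun L => ?_
      by_contra! hT
      exact hnqp ⟨P.factorial + (L + 1), L + 1, le_add_self, by have := P.factorial_pos; omega,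
        iterate_factorial_add_eq (fun x => exists_iterate_mem_periodicPts_of_finite_range (hfin x))
          (fun x => (hT x).le.trans L.le_succ) (fun x hx => (hP x hx).le)⟩
  refine ⟨fun i => F i, fun i n m h => ?_, fun i j hij => disjoint_left.2 ?_⟩
  · simp only [iterate_comp_right_apply] at h
    exact Nat.succ_injective (congrArg Prod.snd (@hF (i, n + 1) (i, m + 1) h))
  · rintro _ ⟨n, rfl⟩ ⟨m, hm⟩
    simp only [iterate_comp_right_apply] at hm
    exact hij (Fin.ext (congrArg Prod.fst (@hF (j, m + 1) (i, n + 1) hm)).symm)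
end

section
/- Let X have at least two elements and φ : Γ → Γ. The generalized shift σ_φ : X^Γ → X^Γ has no point with infinite orbit if and only if φ is quasi-periodic. -/
/-- The generalized shift `σ_φ` has no point with infinite orbit iff `φ` is quasi-periodic. -/
theorem genShift_no_wandering_iff_quasiPeriodic {X Γ : Type*} [Nontrivial X] [Nonempty Γ]
    (φ : Γ → Γ) :
    (∀ x : Γ → X, (Set.range fun n : ℕ => (fun y : Γ → X => y ∘ φ)^[n] x).Finite) ↔
      ∃ n m : ℕ, 1 ≤ m ∧ m < n ∧ φ^[n] = φ^[m] := by
  classical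
  obtain ⟨a, b, hab⟩ := exists_pair_ne X
  have hiter : ∀ (x : Γ → X) (n : ℕ), (fun y : Γ → X => y ∘ φ)^[n] x = x ∘ φ^[n] := by
    intro x n
    induction n with
    | zero => rfl
    | succ n ih =>
      rw [Function.iterate_succ_apply', ih, Function.iterate_succ]
      rfl
  constructor
  · -- hard direction
    intro H
    by_contra hQP
    push_neg at hQP
    -- hQP : ∀ n m, 1 ≤ m → m < n → φ^[n] ≠ φ^[m]
    set xS : Set Γ → Γ → X := fun S γ => if γ ∈ S then a else b with hxS
    have main : ∀ S : Set Γ, ¬ Function.Injective (fun n : ℕ => (xS S) ∘ φ^[n]) := by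
      intro S hinj
      have heq : (fun n : ℕ => (fun y : Γ → X => y ∘ φ)^[n] (xS S))
          = fun n : ℕ => (xS S) ∘ φ^[n] := funext fun n => hiter (xS S) n
      have hinf : (Set.range fun n : ℕ => (fun y : Γ → X => y ∘ φ)^[n] (xS S)).Infinite := by
        rw [heq]
        exact Set.infinite_range_of_injective hinj
      exact hinf (H (xS S))
    have key : ∀ S : Set Γ,
        (∀ n m : ℕ, n < m → ∃ γ, ¬(φ^[n] γ ∈ S ↔ φ^[m] γ ∈ S)) → False := by
      intro S hsep
      apply main S
      intro n m heq
      by_contra hne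
      have hiff : ∀ γ, (φ^[n] γ ∈ S ↔ φ^[m] γ ∈ S) := by
        intro γ
        have hv : xS S (φ^[n] γ) = xS S (φ^[m] γ) := congrFun heq γ
        constructor
        · intro h1
          by_contra h2
          rw [hxS] at hv
          simp only [if_pos h1, if_neg h2] at hv
          exact hab hv
        · intro h2
          by_contra h1
          rw [hxS] at hv
          simp only [if_neg h1, if_pos h2] at hv
          exact hab hv.symm
      rcases Ne.lt_or_gt hne with h | h
      · obtain ⟨γ, hγ⟩ := hsep n m h
        exact hγ (hiff γ)
      · obtain ⟨γ, hγ⟩ := hsep m n h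
        exact hγ (hiff γ).symm
    by_cases hA : ∃ γ₀ : Γ, Function.Injective fun k : ℕ => φ^[k] γ₀
    · -- a point with infinite orbit: use squares
      obtain ⟨γ₀, hinj⟩ := hA
      apply key (Set.range fun k : ℕ => φ^[k * k] γ₀)
      intro n m hnm
      refine ⟨φ^[(m + 1) * (m + 1) - n] γ₀, ?_⟩
      have hle : n ≤ (m + 1) * (m + 1) := by nlinarith
      have hin : φ^[n] (φ^[(m + 1) * (m + 1) - n] γ₀) ∈ Set.range fun k : ℕ => φ^[k * k] γ₀ := by
        refine ⟨m + 1, ?_⟩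
        show φ^[(m + 1) * (m + 1)] γ₀ = _
        rw [← Function.iterate_add_apply,
          show n + ((m + 1) * (m + 1) - n) = (m + 1) * (m + 1) by omega]
      have hout : φ^[m] (φ^[(m + 1) * (m + 1) - n] γ₀) ∉ Set.range fun k : ℕ => φ^[k * k] γ₀ := by
        intro hm'
        obtain ⟨t, ht⟩ := hm'
        rw [← Function.iterate_add_apply] at ht
        have ht' : t * t = m + ((m + 1) * (m + 1) - n) :=
          hinj ht
        have h1 : (m + 1) * (m + 1) < t * t := by omega
        have h2 : m + 2 ≤ t := by
          by_contra hc
          push_neg at hc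
          have hc' : t ≤ m + 1 := by omega
          have := Nat.mul_le_mul hc' hc'
          omega
        have h3 : (m + 2) * (m + 2) ≤ t * t := Nat.mul_le_mul h2 h2
        have hB : (m + 2) * (m + 2) = (m + 1) * (m + 1) + 2 * m + 3 := by ring
        omega
      exact fun hiff => hout (hiff.mp hin)
    · push_neg at hA
      have hB : ∀ γ : Γ, ∃ m p : ℕ, 0 < p ∧ φ^[m + p] γ = φ^[m] γ := by
        intro γ
        obtain ⟨k, l, hkl, hne⟩ := Function.not_injective_iff.mp (hA γ)
        rcases hne.lt_or_gt with h | h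
        · exact ⟨k, l - k, by omega, by rw [show k + (l - k) = l by omega]; exact hkl.symm⟩
        · exact ⟨l, k - l, by omega, by rw [show l + (k - l) = k by omega]; exact hkl⟩
      by_cases hP : ∃ P : ℕ, ∀ γ : Γ, Function.minimalPeriod φ γ ≤ P
      · obtain ⟨P, hPle⟩ := hP
        have hq1 : 0 < Nat.factorial P := Nat.factorial_pos P
        have hq : ∀ γ : Γ, ∃ m : ℕ, φ^[m + Nat.factorial P] γ = φ^[m] γ := by
          intro γ
          obtain ⟨m, p, hp, hfix⟩ := hB γ
          have hpp : Function.IsPeriodicPt φ p (φ^[m] γ) := by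
            show φ^[p] (φ^[m] γ) = φ^[m] γ
            rw [← Function.iterate_add_apply]
            rwa [Nat.add_comm]
          have hdvd : Function.minimalPeriod φ (φ^[m] γ) ∣ Nat.factorial P :=
            Nat.dvd_factorial (hpp.minimalPeriod_pos hp) (hPle _)
          have hq' : Function.IsPeriodicPt φ (Nat.factorial P) (φ^[m] γ) :=
            (Function.isPeriodicPt_minimalPeriod φ _).trans_dvd hdvd
          refine ⟨m, ?_⟩
          rw [Nat.add_comm, Function.iterate_add_apply]
          exact hq'
        -- shift an eventual-fixedness witness forward
        have step : ∀ (γ : Γ) (i j : ℕ), φ^[i + Nat.factorial P] γ = φ^[i] γ → i ≤ j →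
            φ^[j + Nat.factorial P] γ = φ^[j] γ := by
          intro γ i j hfix hij
          have h1 : j + Nat.factorial P = (j - i) + (i + Nat.factorial P) := by omega
          have h2 : j = (j - i) + i := by omega
          rw [h1, Function.iterate_add_apply, hfix, ← Function.iterate_add_apply, ← h2]
        by_cases hM : ∃ M : ℕ, ∀ γ : Γ, Nat.find (hq γ) ≤ M
        · obtain ⟨M, hMle⟩ := hM
          refine hQP (max M 1 + Nat.factorial P) (max M 1) (le_max_right _ _) (by omega) ?_
          funext γ
          exact step γ _ _ (Nat.find_spec (hq γ)) (le_trans (hMle γ) (le_max_left _ _))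
        · push_neg at hM
          apply key {γ : Γ | φ^[Nat.factorial P] γ = γ}
          intro n m hnm
          have mem_iff : ∀ (γ : Γ) (k : ℕ),
              φ^[k] γ ∈ {γ : Γ | φ^[Nat.factorial P] γ = γ} ↔ Nat.find (hq γ) ≤ k := by
            intro γ k
            constructor
            · intro h
              apply Nat.find_le
              show φ^[k + Nat.factorial P] γ = φ^[k] γ
              rw [Nat.add_comm, Function.iterate_add_apply]
              exact h
            · intro h
              show φ^[Nat.factorial P] (φ^[k] γ) = φ^[k] γ
              rw [← Function.iterate_add_apply, Nat.add_comm]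
              exact step γ _ _ (Nat.find_spec (hq γ)) h
          obtain ⟨γ₀, hγ₀⟩ := hM n
          by_cases hf : Nat.find (hq γ₀) ≤ m
          · refine ⟨γ₀, fun hiff => ?_⟩
            rw [mem_iff, mem_iff] at hiff
            omega
          · push_neg at hf
            set f₀ := Nat.find (hq γ₀) with hf₀
            refine ⟨φ^[f₀ - m] γ₀, ?_⟩
            have hmem : ∀ k : ℕ, φ^[k] (φ^[f₀ - m] γ₀) = φ^[k + (f₀ - m)] γ₀ := by
              intro k
              rw [Function.iterate_add_apply]
            have hout : φ^[n] (φ^[f₀ - m] γ₀) ∉ {γ : Γ | φ^[Nat.factorial P] γ = γ} := by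
              intro hn'
              have h1 : φ^[Nat.factorial P] (φ^[n + (f₀ - m)] γ₀) = φ^[n + (f₀ - m)] γ₀ := by
                rw [← hmem]; exact hn'
              have h2 : Nat.find (hq γ₀) ≤ n + (f₀ - m) := by
                apply Nat.find_le
                show φ^[(n + (f₀ - m)) + Nat.factorial P] γ₀ = φ^[n + (f₀ - m)] γ₀
                rw [Nat.add_comm, Function.iterate_add_apply]
                exact h1
              omega
            have hin : φ^[m] (φ^[f₀ - m] γ₀) ∈ {γ : Γ | φ^[Nat.factorial P] γ = γ} := by
              show φ^[Nat.factorial P] (φ^[m] (φ^[f₀ - m] γ₀)) = φ^[m] (φ^[f₀ - m] γ₀)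
              rw [hmem, show m + (f₀ - m) = f₀ by omega,
                ← Function.iterate_add_apply, Nat.add_comm]
              exact Nat.find_spec (hq γ₀)
            exact fun hiff => hout (hiff.mpr hin)
      · -- unbounded minimal periods
        push_neg at hP
        have pick : ∀ P : ℕ, ∃ γ : Γ, P < Function.minimalPeriod φ γ := hP
        set c : ℕ → Γ := fun k =>
          Nat.rec (Classical.choose (pick 0))
            (fun _ prev => Classical.choose (pick (Function.minimalPeriod φ prev))) k with hc
        have hc0 : 0 < Function.minimalPeriod φ (c 0) := Classical.choose_spec (pick 0)
        have hcs : ∀ k : ℕ, Function.minimalPeriod φ (c k)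
            < Function.minimalPeriod φ (c (k + 1)) := fun k =>
          Classical.choose_spec (pick (Function.minimalPeriod φ (c k)))
        have hmono : StrictMono fun k => Function.minimalPeriod φ (c k) :=
          strictMono_nat_of_lt_succ hcs
        have hpos : ∀ k, 0 < Function.minimalPeriod φ (c k) := by
          intro k
          induction k with
          | zero => exact hc0
          | succ k ih => exact lt_trans ih (hcs k)
        apply key (Set.range c)
        intro n m hnm
        set k := m + 1 with hk
        set p := Function.minimalPeriod φ (c k) with hp
        have hpk : m < p := lt_of_lt_of_le (show m < k by omega)
          hmono.le_apply
        refine ⟨φ^[p - n] (c k), ?_⟩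
        have hper : φ^[p] (c k) = c k := Function.iterate_minimalPeriod
        have hout : φ^[m] (φ^[p - n] (c k)) ∉ Set.range c := by
          intro hm'
          -- φ^[m] (φ^[p-n] (c k)) = φ^[m - n] (c k) ∈ range c leads to contradiction
          have hval : φ^[m] (φ^[p - n] (c k)) = φ^[m - n] (c k) := by
            rw [← Function.iterate_add_apply,
              show m + (p - n) = (m - n) + p by omega,
              Function.iterate_add_apply, hper]
          rw [hval] at hm'
          obtain ⟨j, hj⟩ := hm'
          have hcperiodic : c k ∈ Function.periodicPts φ :=
            Function.mk_mem_periodicPts (hpos k) (Function.isPeriodicPt_minimalPeriod φ _)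
          have hsame : Function.minimalPeriod φ (c j) = p := by
            rw [hj, Function.minimalPeriod_apply_iterate hcperiodic]
          have hjk : j = k := by
            have := hmono.injective (a₁ := j) (a₂ := k) (by rw [hsame])
            exact this
          rw [hjk] at hj
          have : Function.minimalPeriod φ (c k) ≤ m - n := by
            apply Function.IsPeriodicPt.minimalPeriod_le (by omega)
            exact hj.symm
          omega
        have hin : φ^[n] (φ^[p - n] (c k)) ∈ Set.range c := by
          refine ⟨k, ?_⟩
          have hv : φ^[n] (φ^[p - n] (c k)) = φ^[p] (c k) := by
            rw [← Function.iterate_add_apply, show n + (p - n) = p by omega]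
          rw [hv, hper]
        exact fun hiff => hout (hiff.mp hin)
  · -- easy direction
    rintro ⟨n, m, hm, hmn, hfix⟩ x
    have key : ∀ k : ℕ, ∃ j < n, φ^[k] = φ^[j] := by
      intro k
      induction k using Nat.strong_induction_on with
      | _ k ih =>
        by_cases hk : k < n
        · exact ⟨k, hk, rfl⟩
        · push_neg at hk
          have hd : φ^[k] = φ^[k - (n - m)] := by
            calc φ^[k] = φ^[(k - n) + n] := by rw [show k - n + n = k by omega]
            _ = φ^[k - n] ∘ φ^[n] := Function.iterate_add φ _ _
            _ = φ^[k - n] ∘ φ^[m] := by rw [hfix]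
            _ = φ^[(k - n) + m] := (Function.iterate_add φ _ _).symm
            _ = φ^[k - (n - m)] := by rw [show k - n + m = k - (n - m) by omega]
          obtain ⟨j, hj, hjeq⟩ := ih (k - (n - m)) (by omega)
          exact ⟨j, hj, hd.trans hjeq⟩
    have hsub : (Set.range fun k : ℕ => (fun y : Γ → X => y ∘ φ)^[k] x)
        ⊆ (fun j : ℕ => x ∘ φ^[j]) '' (Set.Iio n) := by
      rintro _ ⟨k, rfl⟩
      obtain ⟨j, hj, hjeq⟩ := key k
      refine ⟨j, hj, ?_⟩
      show x ∘ φ^[j] = (fun y : Γ → X => y ∘ φ)^[k] x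
      rw [hiter x k, hjeq]
    exact ((Set.finite_Iio n).image _).subset hsub
end

section
/- Let X have at least two elements and φ : Γ → Γ. If φ is not quasi-periodic then the set-theoretical entropy of σ_φ is infinite, and if φ is quasi-periodic then it is zero; thus ent_set(σ_φ) ∈ {0, ∞}. -/
/-!
If `φ^[n] = φ^[m]` with `n > m ≥ 1`, then also `σ_φ^[n] = σ_φ^[m]`, so no orbit of `σ_φ` is
injective. Otherwise we produce any number of disjoint injective orbits, already among
`{0, 1}`-valued functions, i.e. for the preimage map of `φ` on `Set Γ`. A semiconjugacy `π`
between `φ` and a model map `ψ` transfers such orbits from `σ_ψ` to `σ_φ` (restriction along an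
injective `π`, pullback along a surjective `π`), and a map that is not quasi-periodic has one of
three models: an injective orbit gives the successor on `ℕ`; unbounded preperiods give the
predecessor on `ℕ`, through the preperiod map; unbounded minimal periods give a disjoint union of
cycles `ZMod q` with `q` unbounded. On `ℕ` the sets `(2i+1)·2^ℕ` are pairwise distinct and not
moved into each other by translations; on the cycles the two-point sets `{0, i+1}` play this role.
-/
open scoped ENNReal

/-- The infinite orbit number `𝔬(g)`, which equals the set-theoretical entropy
`ent_set(g)`: the supremum (in `ℕ∞`) of the number of pairwise disjoint injective
orbit sequences of `g`. -/
noncomputable def entSet {A : Type*} (g : A → A) : ℕ∞ :=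
  sSup {c : ℕ∞ | ∃ k : ℕ, c = (k : ℕ∞) ∧ ∃ a : Fin k → A,
    (∀ i, Function.Injective fun n : ℕ => g^[n + 1] (a i)) ∧
    ∀ i j, i ≠ j → Disjoint (Set.range fun n : ℕ => g^[n + 1] (a i))
      (Set.range fun n : ℕ => g^[n + 1] (a j))}

open Function

section Orbits

variable {A B : Type*}

def HasDisjointOrbits (g : A → A) (k : ℕ) : Prop :=
  ∃ a : Fin k → A, Injective fun p : Fin k × ℕ => g^[p.2 + 1] (a p.1)

namespace HasDisjointOrbits

variable {g : A → A} {h : B → B} {f : A → B} {k : ℕ}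

theorem le_entSet (hg : HasDisjointOrbits g k) : (k : ℕ∞) ≤ entSet g := by
  obtain ⟨a, ha⟩ := hg
  refine le_sSup ⟨k, rfl, a, fun i n m hnm => congrArg Prod.snd (@ha (i, n) (i, m) hnm),
    fun i j hij => Set.disjoint_left.mpr ?_⟩
  rintro _ ⟨n, rfl⟩ ⟨m, hm⟩
  exact hij (congrArg Prod.fst (@ha (i, n) (j, m) hm.symm))

theorem of_semiconj_injective (hf : Injective f) (hfgh : Semiconj f g h)
    (hg : HasDisjointOrbits g k) : HasDisjointOrbits h k := by
  obtain ⟨a, ha⟩ := hg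
  refine ⟨f ∘ a, fun p p' hpp' => ha (hf ?_)⟩
  simpa only [comp_apply, (hfgh.iterate_right _).eq] using hpp'

theorem of_semiconj_surjective (hf : Surjective f) (hfgh : Semiconj f g h)
    (hh : HasDisjointOrbits h k) : HasDisjointOrbits g k := by
  obtain ⟨b, hb⟩ := hh
  refine ⟨surjInv hf ∘ b, fun p p' hpp' => hb ?_⟩
  simpa only [comp_apply, (hfgh.iterate_right _).eq, surjInv_eq hf] using congrArg f hpp'

end HasDisjointOrbits

theorem entSet_eq_top_of_hasDisjointOrbits {g : A → A} (hg : ∀ k, HasDisjointOrbits g k) :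
    entSet g = ⊤ :=
  ENat.eq_top_iff_forall_ge.mpr fun k => (hg k).le_entSet

theorem entSet_eq_zero_of_iterate_eq {g : A → A} {n m : ℕ} (hm : 1 ≤ m) (hmn : m < n)
    (hg : g^[n] = g^[m]) : entSet g = 0 := by
  refine nonpos_iff_eq_zero.mp (sSup_le ?_)
  rintro _ ⟨_ | k, rfl, a, hinj, -⟩
  · rfl
  · have h := @hinj 0 (n - 1) (m - 1) (by
      simp only [Nat.sub_add_cancel (hm.trans hmn.le), Nat.sub_add_cancel hm, hg])
    omega

end Orbits

abbrev genShift (X : Type*) {Γ : Type*} (φ : Γ → Γ) : (Γ → X) → Γ → X := fun y => y ∘ φ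

section GenShift

variable {X Y Γ Γ' : Type*} {φ : Γ → Γ} {ψ : Γ' → Γ'} {k : ℕ}

theorem genShift_iterate (φ : Γ → Γ) (n : ℕ) : (genShift X φ)^[n] = genShift X φ^[n] := by
  induction n with
  | zero => rfl
  | succ n ih => rw [iterate_succ', ih, iterate_succ]; rfl

theorem Function.Semiconj.genShift {π : Γ' → Γ} (h : Semiconj π ψ φ) :
    Semiconj (fun y : Γ → X => y ∘ π) (genShift X φ) (genShift X ψ) :=
  fun y => funext fun γ => congrArg y (h γ).symm

namespace HasDisjointOrbits

theorem genShift_of_injective_semiconj [Nonempty X] {π : Γ' → Γ} (hπ : Injective π)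
    (h : Semiconj π ψ φ) (hk : HasDisjointOrbits (genShift X ψ) k) :
    HasDisjointOrbits (genShift X φ) k :=
  hk.of_semiconj_surjective hπ.surjective_comp_right h.genShift

theorem genShift_of_surjective_semiconj {π : Γ → Γ'} (hπ : Surjective π) (h : Semiconj π φ ψ)
    (hk : HasDisjointOrbits (genShift X ψ) k) : HasDisjointOrbits (genShift X φ) k :=
  hk.of_semiconj_injective hπ.injective_comp_right h.genShift

theorem genShift_of_injective {f : Y → X} (hf : Injective f)
    (hk : HasDisjointOrbits (genShift Y φ) k) : HasDisjointOrbits (genShift X φ) k :=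
  hk.of_semiconj_injective hf.comp_left fun _ => rfl

end HasDisjointOrbits

end GenShift

def oddTower (i : ℕ) : Set ℕ := Set.range fun s => (2 * i + 1) * 2 ^ s

theorem odd_mul_two_pow_inj {i j a b : ℕ} (h : (2 * i + 1) * 2 ^ a = (2 * j + 1) * 2 ^ b) :
    i = j ∧ a = b := by
  induction a generalizing b with
  | zero =>
    cases b with
    | zero => simp only [pow_zero, mul_one] at h; omega
    | succ b => rw [pow_succ, ← mul_assoc] at h; omega
  | succ a ih =>
    cases b with
    | zero => rw [pow_succ, ← mul_assoc] at h; omega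
    | succ b =>
      rw [pow_succ, pow_succ, ← mul_assoc, ← mul_assoc] at h
      exact (ih (by omega)).imp id (congrArg (· + 1))

theorem eq_of_forall_add_mem_oddTower_iff {i j n m : ℕ}
    (h : ∀ t, t + n ∈ oddTower i ↔ t + m ∈ oddTower j) : i = j ∧ n = m := by
  wlog hmn : m ≤ n generalizing i j n m
  · exact (this (fun t => (h t).symm) (by omega)).imp Eq.symm Eq.symm
  obtain ⟨d, rfl⟩ := Nat.exists_eq_add_of_le hmn
  have h' : ∀ u, m ≤ u → (u + d ∈ oddTower i ↔ u ∈ oddTower j) := fun u hu => by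
    simpa only [Nat.sub_add_cancel hu, ← add_assoc] using h (u - m)
  set x := (2 * j + 1) * 2 ^ m with hx
  have hmx : m < x := (Nat.lt_two_pow_self).trans_le (Nat.le_mul_of_pos_left _ (by omega))
  obtain ⟨a, ha⟩ := (h' x hmx.le).mpr ⟨m, rfl⟩
  obtain ⟨b, hb⟩ := (h' (2 * x) (by omega)).mpr ⟨m + 1, by simp only [hx, pow_succ]; ring⟩
  simp only at ha hb
  -- `x + d` and `2 * x + d` both lie in the tower of `i`, whose consecutive elements differ by a
  -- factor `2`; this forces `d = 0`
  have hab : a < b := by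
    have : 2 ^ a < 2 ^ b := Nat.lt_of_mul_lt_mul_left (a := 2 * i + 1) (by omega)
    exact (Nat.pow_lt_pow_iff_right (by norm_num)).mp this
  have hba : b ≤ a + 1 := by
    have : 2 ^ b ≤ 2 ^ (a + 1) :=
      Nat.le_of_mul_le_mul_left (by rw [pow_succ, ← mul_assoc]; omega) (by omega : 0 < 2 * i + 1)
    exact (Nat.pow_le_pow_iff_right (by norm_num)).mp this
  obtain rfl : b = a + 1 := by omega
  rw [pow_succ, ← mul_assoc] at hb
  obtain rfl : d = 0 := by omega
  exact ⟨(odd_mul_two_pow_inj (ha.trans hx)).1, rfl⟩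

theorem hasDisjointOrbits_genShift_succ (k : ℕ) :
    HasDisjointOrbits (genShift Prop Nat.succ) k := by
  refine ⟨fun i t => t ∈ oddTower i, fun ⟨i, n⟩ ⟨j, m⟩ h => ?_⟩
  have key : ∀ t, t + (n + 1) ∈ oddTower i ↔ t + (m + 1) ∈ oddTower j := fun t => by
    beta_reduce at h
    rw [genShift_iterate, genShift_iterate] at h
    simpa only [genShift, comp_apply, Nat.succ_iterate] using Iff.of_eq (congrFun h t)
  obtain ⟨hij, hnm⟩ := eq_of_forall_add_mem_oddTower_iff key
  exact Prod.ext (Fin.ext hij) (by omega)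

theorem hasDisjointOrbits_genShift_pred (k : ℕ) :
    HasDisjointOrbits (genShift Prop Nat.pred) k := by
  refine ⟨fun i t => t ∈ oddTower i, fun ⟨i, n⟩ ⟨j, m⟩ h => ?_⟩
  have key : ∀ t, t + (m + 1) ∈ oddTower i ↔ t + (n + 1) ∈ oddTower j := fun t => by
    beta_reduce at h
    rw [genShift_iterate, genShift_iterate] at h
    have e₁ : t + (m + 1) + (n + 1) - (n + 1) = t + (m + 1) := by omega
    have e₂ : t + (m + 1) + (n + 1) - (m + 1) = t + (n + 1) := by omega
    simpa only [genShift, comp_apply, Nat.pred_iterate, e₁, e₂] using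
      Iff.of_eq (congrFun h (t + (m + 1) + (n + 1)))
  obtain ⟨hij, hnm⟩ := eq_of_forall_add_mem_oddTower_iff key
  exact Prod.ext (Fin.ext hij) (by omega)

theorem eq_and_eq_of_forall_pair_translate_iff {G : Type*} [AddCommGroup G] {u v a b : G}
    (hu : u ≠ 0) (huv : u + v ≠ 0)
    (h : ∀ c : G, (c + a = 0 ∨ c + a = u) ↔ (c + b = 0 ∨ c + b = v)) : u = v ∧ a = b := by
  have h₂ := (h (u - a)).mp (Or.inr (sub_add_cancel u a))
  rcases (h (-a)).mp (Or.inl (neg_add_cancel a)) with h₁ | h₁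
  · obtain rfl : a = b := neg_add_eq_zero.mp h₁
    rw [sub_add_cancel] at h₂
    exact ⟨h₂.resolve_left hu, rfl⟩
  · have : u - a + b = u + v := by rw [← h₁]; abel
    rw [this, add_eq_right] at h₂
    exact (h₂.elim huv hu).elim

def cycleShift {ι : Type*} (q : ι → ℕ) (p : Σ s, ZMod (q s)) : Σ s, ZMod (q s) :=
  ⟨p.1, p.2 + 1⟩

theorem cycleShift_iterate {ι : Type*} (q : ι → ℕ) (n : ℕ) (s : ι) (c : ZMod (q s)) :
    (cycleShift q)^[n] ⟨s, c⟩ = ⟨s, c + n⟩ := by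
  induction n with
  | zero => simp
  | succ n ih => rw [iterate_succ_apply', ih]; simp [cycleShift, add_assoc]

theorem ZMod.natCast_injOn_Iio (q : ℕ) : Set.InjOn (Nat.cast : ℕ → ZMod q) (Set.Iio q) :=
  fun a ha b hb h => by rw [← ZMod.val_cast_of_lt ha, h, ZMod.val_cast_of_lt hb]

theorem hasDisjointOrbits_genShift_cycleShift {ι : Type*} (q : ι → ℕ) (hq : ∀ B, ∃ s, B < q s)
    (k : ℕ) : HasDisjointOrbits (genShift Prop (cycleShift q)) k := by
  refine ⟨fun i p => p.2 = 0 ∨ p.2 = ((i + 1 : ℕ) : ZMod (q p.1)), ?_⟩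
  rintro ⟨i, n⟩ ⟨j, m⟩ h
  beta_reduce at h
  rw [genShift_iterate, genShift_iterate] at h
  obtain ⟨s, hs⟩ := hq (n + m + 2 * k + 2)
  have hinj {a b : ℕ} (ha : a < q s) (hb : b < q s) (hab : (a : ZMod (q s)) = b) : a = b :=
    ZMod.natCast_injOn_Iio (q s) ha hb hab
  have key (c : ZMod (q s)) :
      (c + (n + 1 : ℕ) = 0 ∨ c + (n + 1 : ℕ) = ((i + 1 : ℕ) : ZMod (q s))) ↔
        (c + (m + 1 : ℕ) = 0 ∨ c + (m + 1 : ℕ) = ((j + 1 : ℕ) : ZMod (q s))) := by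
    have := Iff.of_eq (congrFun h ⟨s, c⟩)
    simp only [genShift, comp_apply] at this
    rwa [cycleShift_iterate, cycleShift_iterate] at this
  have hu : ((i + 1 : ℕ) : ZMod (q s)) ≠ 0 := fun h0 =>
    absurd (hinj (by omega) (by omega) (h0.trans Nat.cast_zero.symm)) (by omega)
  have huv : ((i + 1 : ℕ) : ZMod (q s)) + ((j + 1 : ℕ) : ZMod (q s)) ≠ 0 := fun h0 =>
    absurd (hinj (by omega) (by omega) ((Nat.cast_add _ _).trans (h0.trans Nat.cast_zero.symm)))
      (by omega)
  obtain ⟨hij, hnm⟩ := eq_and_eq_of_forall_pair_translate_iff hu huv key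
  have hij := hinj (by omega) (by omega) hij
  have hnm := hinj (by omega) (by omega) hnm
  simp only [Prod.mk.injEq, Fin.ext_iff]
  omega

section Periodic

variable {Γ : Type*} {φ : Γ → Γ}

theorem iterate_mem_periodicPts {γ : Γ} (h : γ ∈ periodicPts φ) (n : ℕ) :
    φ^[n] γ ∈ periodicPts φ :=
  let ⟨_, hq, hγ⟩ := mem_periodicPts.mp h
  mk_mem_periodicPts hq (hγ.apply_iterate n)

theorem exists_iterate_mem_periodicPts_of_not_injective {γ : Γ}
    (h : ¬Injective fun t => φ^[t] γ) : ∃ r, φ^[r] γ ∈ periodicPts φ := by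
  obtain ⟨a, b, hab, hne⟩ := not_injective_iff.mp h
  wlog hlt : a < b generalizing a b
  · exact this b a hab.symm (Ne.symm hne) (by omega)
  refine ⟨a, mk_mem_periodicPts (Nat.sub_pos_of_lt hlt) ?_⟩
  change φ^[b - a] (φ^[a] γ) = φ^[a] γ
  rw [← iterate_add_apply, Nat.sub_add_cancel hlt.le]
  exact hab.symm

theorem exists_surjective_semiconj_pred (hev : ∀ γ, ∃ r, φ^[r] γ ∈ periodicPts φ)
    (hunb : ∀ N, ∃ γ, φ^[N] γ ∉ periodicPts φ) :
    ∃ ρ : Γ → ℕ, Surjective ρ ∧ Semiconj ρ φ Nat.pred := by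
  classical
  let ρ γ := Nat.find (hev γ)
  have hρ (γ : Γ) (r : ℕ) : ρ γ ≤ r ↔ φ^[r] γ ∈ periodicPts φ := by
    refine ⟨fun h => ?_, fun h => Nat.find_min' _ h⟩
    rw [← Nat.sub_add_cancel h, iterate_add_apply]
    exact iterate_mem_periodicPts (Nat.find_spec (hev γ)) _
  have hsemi : Semiconj ρ φ Nat.pred := fun γ => eq_of_forall_ge_iff fun r => by
    rw [hρ, ← iterate_succ_apply, ← hρ, Nat.pred_eq_sub_one]
    omega
  refine ⟨ρ, fun N => ?_, hsemi⟩
  obtain ⟨γ, hγ⟩ := hunb N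
  have hN : N < ρ γ := not_le.mp fun h => hγ ((hρ γ N).mp h)
  refine ⟨φ^[ρ γ - N] γ, ?_⟩
  rw [(hsemi.iterate_right _).eq, Nat.pred_iterate]
  omega

theorem iterate_add_factorial_eq {N B : ℕ} (hN : ∀ γ, φ^[N] γ ∈ periodicPts φ)
    (hB : ∀ δ ∈ periodicPts φ, minimalPeriod φ δ ≤ B) : φ^[B.factorial + N] = φ^[N] :=
  funext fun γ => by
    rw [iterate_add_apply]
    exact (isPeriodicPt_minimalPeriod φ _).trans_dvd
      (Nat.dvd_factorial (minimalPeriod_pos_of_mem_periodicPts (hN γ)) (hB _ (hN γ)))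

theorem iterate_eq_iterate_of_natCast_eq {γ : Γ} {a b : ℕ}
    (h : (a : ZMod (minimalPeriod φ γ)) = b) : φ^[a] γ = φ^[b] γ := by
  rw [← iterate_mod_minimalPeriod_eq, (ZMod.natCast_eq_natCast_iff' _ _ _).mp h,
    iterate_mod_minimalPeriod_eq]

end Periodic

section Cases

variable {Γ : Type*} {φ : Γ → Γ}

theorem hasDisjointOrbits_genShift_of_unbounded_periods
    (hper : ∀ B, ∃ δ ∈ periodicPts φ, B < minimalPeriod φ δ) (k : ℕ) :
    HasDisjointOrbits (genShift Prop φ) k := by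
  let P := minimalPeriod φ '' periodicPts φ
  choose δ hδ hδP using fun p : P => p.2
  have (p : P) : NeZero (p : ℕ) :=
    ⟨hδP p ▸ (minimalPeriod_pos_of_mem_periodicPts (hδ p)).ne'⟩
  let π : (Σ p : P, ZMod (p : ℕ)) → Γ := fun x => φ^[x.2.val] (δ x.1)
  have hsemi : Semiconj π (cycleShift fun p : P => (p : ℕ)) φ := by
    rintro ⟨p, c⟩
    change φ^[(c + 1).val] (δ p) = φ (φ^[c.val] (δ p))
    rw [← iterate_succ_apply' φ c.val]
    apply iterate_eq_iterate_of_natCast_eq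
    rw [hδP]
    push_cast
    simp only [ZMod.natCast_zmod_val]
  have hinj : Injective π := by
    rintro ⟨p, c⟩ ⟨p', c'⟩ h
    change φ^[c.val] (δ p) = φ^[c'.val] (δ p') at h
    obtain rfl : p = p' := Subtype.ext <| by
      rw [← hδP, ← hδP, ← minimalPeriod_apply_iterate (hδ p) c.val, h,
        minimalPeriod_apply_iterate (hδ p')]
    have hlt (c : ZMod p) : c.val < minimalPeriod φ (δ p) := by
      rw [hδP]; exact ZMod.val_lt c
    rw [iterate_eq_iterate_iff_of_lt_minimalPeriod (hlt c) (hlt c')] at h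
    rw [ZMod.val_injective _ h]
  have hunb (B : ℕ) : ∃ p : P, B < p :=
    let ⟨γ, hγ, hB⟩ := hper B
    ⟨⟨_, γ, hγ, rfl⟩, hB⟩
  exact (hasDisjointOrbits_genShift_cycleShift _ hunb k).genShift_of_injective_semiconj hinj hsemi

theorem hasDisjointOrbits_genShift_of_not_quasiPeriodic
    (hφ : ¬∃ n m, 1 ≤ m ∧ m < n ∧ φ^[n] = φ^[m]) (k : ℕ) :
    HasDisjointOrbits (genShift Prop φ) k := by
  by_cases hinj : ∃ γ, Injective fun t => φ^[t] γ
  · obtain ⟨γ, hγ⟩ := hinj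
    exact (hasDisjointOrbits_genShift_succ k).genShift_of_injective_semiconj hγ
      fun t => iterate_succ_apply' φ t γ
  push Not at hinj
  have hev γ := exists_iterate_mem_periodicPts_of_not_injective (hinj γ)
  by_cases hpre : ∀ N, ∃ γ, φ^[N] γ ∉ periodicPts φ
  · obtain ⟨ρ, hρ, hsemi⟩ := exists_surjective_semiconj_pred hev hpre
    exact (hasDisjointOrbits_genShift_pred k).genShift_of_surjective_semiconj hρ hsemi
  push Not at hpre
  obtain ⟨N, hN⟩ := hpre
  refine hasDisjointOrbits_genShift_of_unbounded_periods (fun B => ?_) k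
  by_contra! hB
  have hN' (γ : Γ) : φ^[N + 1] γ ∈ periodicPts φ := by
    rw [iterate_succ_apply]; exact hN (φ γ)
  exact hφ ⟨_, _, le_add_self, by have := Nat.factorial_pos B; omega,
    iterate_add_factorial_eq hN' hB⟩

end Cases

theorem exists_injective_prop (X : Type*) [Nontrivial X] : ∃ f : Prop → X, Injective f := by
  classical
  obtain ⟨x₀, x₁, hx⟩ := exists_pair_ne X
  refine ⟨fun p => if p then x₁ else x₀, fun p q h => ?_⟩
  by_cases hp : p <;> by_cases hq : q <;> simp_all [eq_comm]

theorem entSet_genShift_general {X Γ : Type*} [Nontrivial X] (φ : Γ → Γ) :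
    ((∃ n m : ℕ, 1 ≤ m ∧ m < n ∧ φ^[n] = φ^[m]) →
        entSet (fun y : Γ → X => y ∘ φ) = 0) ∧
    ((¬ ∃ n m : ℕ, 1 ≤ m ∧ m < n ∧ φ^[n] = φ^[m]) →
        entSet (fun y : Γ → X => y ∘ φ) = ⊤) ∧
    (entSet (fun y : Γ → X => y ∘ φ) = 0 ∨ entSet (fun y : Γ → X => y ∘ φ) = ⊤) := by
  obtain ⟨f, hf⟩ := exists_injective_prop X
  have hzero : (∃ n m : ℕ, 1 ≤ m ∧ m < n ∧ φ^[n] = φ^[m]) → entSet (genShift X φ) = 0 :=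
    fun ⟨_, _, hm, hmn, h⟩ =>
      entSet_eq_zero_of_iterate_eq hm hmn (by rw [genShift_iterate, genShift_iterate, h])
  have htop : (¬ ∃ n m : ℕ, 1 ≤ m ∧ m < n ∧ φ^[n] = φ^[m]) → entSet (genShift X φ) = ⊤ :=
    fun h => entSet_eq_top_of_hasDisjointOrbits fun k =>
      (hasDisjointOrbits_genShift_of_not_quasiPeriodic h k).genShift_of_injective hf
  exact ⟨hzero, htop, (em _).imp hzero htop⟩

/-- The set-theoretical entropy of a generalized shift is `0` if `φ` is quasi-periodic
and `∞` otherwise; in particular it lies in `{0, ∞}`. -/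
theorem entSet_genShift {X Γ : Type*} [Nontrivial X] [Nonempty Γ] (φ : Γ → Γ) :
    ((∃ n m : ℕ, 1 ≤ m ∧ m < n ∧ φ^[n] = φ^[m]) →
        entSet (fun y : Γ → X => y ∘ φ) = 0) ∧
    ((¬ ∃ n m : ℕ, 1 ≤ m ∧ m < n ∧ φ^[n] = φ^[m]) →
        entSet (fun y : Γ → X => y ∘ φ) = ⊤) ∧
    (entSet (fun y : Γ → X => y ∘ φ) = 0 ∨ entSet (fun y : Γ → X => y ∘ φ) = ⊤) :=
  entSet_genShift_general φ
end

section
/- Let X have at least two elements and φ : Γ → Γ. The generalized shift σ_φ : X^Γ → X^Γ is surjective if and only if φ is injective. -/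
/-- The generalized shift `σ_φ` is surjective iff `φ` is injective. -/
theorem genShift_surjective_iff {X Γ : Type*} [Nontrivial X] [Nonempty Γ] (φ : Γ → Γ) :
    Function.Surjective (fun y : Γ → X => y ∘ φ) ↔ Function.Injective φ := by
  constructor
  · intro hs a b hab
    by_contra hne
    obtain ⟨u, v, huv⟩ := exists_pair_ne X
    classical
    set x : Γ → X := fun γ => if γ = a then u else v with hx
    obtain ⟨y, hy⟩ := hs x
    have h1 : y (φ a) = x a := congrFun hy a
    have h2 : y (φ b) = x b := congrFun hy b
    rw [hab] at h1
    rw [h1] at h2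
    rw [hx] at h2; simp only [if_pos rfl, if_neg (Ne.symm hne)] at h2
    exact huv h2
  · intro hinj x
    classical
    refine ⟨fun γ => if h : ∃ a, φ a = γ then x h.choose else Classical.arbitrary X, ?_⟩
    funext a
    have h : ∃ b, φ b = φ a := ⟨a, rfl⟩
    simp only [Function.comp_apply, dif_pos h]
    exact congrArg x (hinj h.choose_spec)
end

section
/- Let X have at least two elements and φ : Γ → Γ. The generalized shift σ_φ : X^Γ → X^Γ is finite fibre (every preimage σ_φ⁻¹(x) of a point is finite) if and only if either φ is surjective, or both X and Γ \ φ(Γ) are finite. -/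
/-- The generalized shift `σ_φ` is finite fibre iff `φ` is surjective, or both `X` and
`Γ \ φ(Γ)` are finite. -/
theorem genShift_finiteFibre_iff {X Γ : Type*} [Nontrivial X] [Nonempty Γ] (φ : Γ → Γ) :
    (∀ y : Γ → X, {x : Γ → X | x ∘ φ = y}.Finite) ↔
      (Function.Surjective φ ∨ (Finite X ∧ (Set.range φ)ᶜ.Finite)) := by
  classical
  constructor
  · intro h
    by_cases hsurj : Function.Surjective φ
    · exact Or.inl hsurj
    right
    obtain ⟨a, b, hab⟩ := exists_pair_ne X
    obtain ⟨γ0, hγ0⟩ := not_forall.1 hsurj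
    set S : Set Γ := (Set.range φ)ᶜ with hSdef
    have hγ0S : γ0 ∈ S := by
      simp only [hSdef, Set.mem_compl_iff, Set.mem_range]
      exact fun ⟨g, hg⟩ => hγ0 ⟨g, hg⟩
    have hfib := h (fun _ => a)
    have hfinsub : Finite {x : Γ → X | x ∘ φ = fun _ => a} := hfib.to_subtype
    -- embed (S → X) into the fibre
    have hmem : ∀ f : S → X,
        (fun γ => if hγ : γ ∈ S then f ⟨γ, hγ⟩ else a) ∈
          {x : Γ → X | x ∘ φ = fun _ => a} := by
      intro f
      funext γ
      have : φ γ ∉ S := by simp [hSdef]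
      simp [Function.comp, this]
    have hinj : Function.Injective
        (fun f : S → X =>
          (⟨fun γ => if hγ : γ ∈ S then f ⟨γ, hγ⟩ else a, hmem f⟩ :
            {x : Γ → X | x ∘ φ = fun _ => a})) := by
      intro f g hfg
      funext ⟨γ, hγ⟩
      have := congrFun (congrArg Subtype.val hfg) γ
      simpa [hγ] using this
    have hSXfin : Finite (S → X) := Finite.of_injective _ hinj
    have hXfin : Finite X := by
      have : Function.Injective (fun x : X => (fun _ : S => x)) := by
        intro x y hxy
        exact congrFun hxy ⟨γ0, hγ0S⟩
      exact Finite.of_injective _ this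
    refine ⟨hXfin, ?_⟩
    have hSfin : Finite S := by
      have : Function.Injective (fun s : S => (fun t : S => if t = s then a else b)) := by
        intro s t hst
        by_contra hne
        have h1 : (if s = s then a else b) = (if s = t then a else b) := congrFun hst s
        rw [if_pos rfl, if_neg hne] at h1
        exact hab h1
      exact Finite.of_injective _ this
    exact Set.toFinite S
  · rintro (hsurj | ⟨hX, hS⟩) y
    · apply Set.Subsingleton.finite
      intro x hx x' hx'
      funext γ
      obtain ⟨γ', rfl⟩ := hsurj γ
      exact congrFun ((Set.mem_setOf_eq ▸ hx).trans (Set.mem_setOf_eq ▸ hx').symm) γ'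
    · have hSf : Finite ((Set.range φ)ᶜ : Set Γ) := hS
      have hfin : Finite (((Set.range φ)ᶜ : Set Γ) → X) := inferInstance
      rw [← Set.finite_coe_iff]
      have hinj : Function.Injective
          (fun x : {x : Γ → X | x ∘ φ = y} =>
            (fun s : ((Set.range φ)ᶜ : Set Γ) => x.1 s)) := by
        intro x x' hxx
        ext γ
        by_cases hγ : γ ∈ Set.range φ
        · obtain ⟨g, rfl⟩ := hγ
          have h1 : x.1 (φ g) = y g := congrFun x.2 g
          have h2 : x'.1 (φ g) = y g := congrFun x'.2 g
          rw [h1, h2]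
        · exact congrFun hxx ⟨γ, hγ⟩
      exact Finite.of_injective _ hinj
end

section
/- Let X have at least two elements, φ : Γ → Γ, and ℜ be the relation α ℜ β ⟺ ∃n ≥ 1, φⁿ(α) = φⁿ(β). Define 𝔣 on the surjective cover sc(σ_φ) = ⋂_{n≥1} σ_φⁿ(X^Γ) by 𝔣((x_α)_α) = (x_α)_{[α]∈Γ/ℜ}. Then 𝔣 is a well-defined injection sc(σ_φ) → X^(Γ/ℜ) satisfying 𝔣 ∘ σ_φ = σ_{φ̃} ∘ 𝔣 on sc(σ_φ). -/
variable {Γ : Type*}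

/-- The relation `α ℜ β ⟺ ∃ n ≥ 1, φ^[n] α = φ^[n] β`. -/
def genR (φ : Γ → Γ) (a b : Γ) : Prop := ∃ n : ℕ, 1 ≤ n ∧ φ^[n] a = φ^[n] b

theorem genR_equivalence (φ : Γ → Γ) : Equivalence (genR φ) := by
  constructor
  · intro a; exact ⟨1, le_refl 1, rfl⟩
  · rintro a b ⟨n, hn, h⟩; exact ⟨n, hn, h.symm⟩
  · rintro a b c ⟨n, hn, hab⟩ ⟨m, hm, hbc⟩
    refine ⟨n + m, le_trans hn (Nat.le_add_right _ _), ?_⟩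
    calc φ^[n + m] a = φ^[m] (φ^[n] a) := by
            rw [Nat.add_comm, Function.iterate_add_apply]
      _ = φ^[m] (φ^[n] b) := by rw [hab]
      _ = φ^[n] (φ^[m] b) := by
            rw [← Function.iterate_add_apply, ← Function.iterate_add_apply, Nat.add_comm]
      _ = φ^[n] (φ^[m] c) := by rw [hbc]
      _ = φ^[n + m] c := (Function.iterate_add_apply φ n m c).symm

/-- The setoid on `Γ` given by `ℜ`. -/
def genSetoid (φ : Γ → Γ) : Setoid Γ := ⟨genR φ, genR_equivalence φ⟩

theorem genR_map (φ : Γ → Γ) : ∀ a b : Γ, genR φ a b → genR φ (φ a) (φ b) := by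
  rintro a b ⟨n, hn, hab⟩
  refine ⟨n, hn, ?_⟩
  rw [← Function.iterate_succ_apply, ← Function.iterate_succ_apply,
    Function.iterate_succ_apply', Function.iterate_succ_apply', hab]

/-- The induced map `φ̃ : Γ/ℜ → Γ/ℜ`, `[α] ↦ [φ(α)]`. -/
def phiTilde (φ : Γ → Γ) : Quotient (genSetoid φ) → Quotient (genSetoid φ) :=
  Quotient.map' φ (genR_map φ)

/-- The surjective cover of the generalized shift: `sc(σ_φ) = ⋂_{n ≥ 1} σ_φ^[n](X^Γ)`. -/
def scShift (X : Type*) (φ : Γ → Γ) : Set (Γ → X) :=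
  ⋂ n ∈ {n : ℕ | 1 ≤ n}, Set.range (fun y : Γ → X => y ∘ φ)^[n]

/-- The map `𝔣 : sc(σ_φ) → X^(Γ/ℜ)`, sending `x` to `[α] ↦ x(α)` (via a choice of
representatives). -/
noncomputable def frakF {X : Type*} (φ : Γ → Γ) (x : Γ → X) :
    Quotient (genSetoid φ) → X := fun c => x c.out


lemma comp_iterate {X : Type*} (φ : Γ → Γ) (n : ℕ) (y : Γ → X) :
    (fun y : Γ → X => y ∘ φ)^[n] y = y ∘ φ^[n] := by
  induction n with
  | zero => rfl
  | succ n ih =>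
    rw [Function.iterate_succ_apply', ih]
    funext a
    simp [Function.iterate_succ_apply]

lemma scShift_const {X : Type*} (φ : Γ → Γ) (x : Γ → X) (hx : x ∈ scShift X φ) :
    ∀ θ β : Γ, genR φ θ β → x θ = x β := by
  rintro θ β ⟨n, hn, h⟩
  obtain ⟨y, hy⟩ := Set.mem_iInter₂.mp hx n hn
  rw [comp_iterate] at hy
  rw [← hy]
  simp only [Function.comp_apply, h]

/-- `𝔣` is well-defined (every `x ∈ sc(σ_φ)` is constant on `ℜ`-classes), injective on
`sc(σ_φ)`, and intertwines `σ_φ` with `σ_{φ̃}`: `𝔣 ∘ σ_φ = σ_{φ̃} ∘ 𝔣` on `sc(σ_φ)`. -/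
theorem frakF_injective_and_commutes {X : Type*} [Nontrivial X] [Nonempty Γ] (φ : Γ → Γ) :
    (∀ x ∈ scShift X φ, ∀ θ β : Γ, genR φ θ β → x θ = x β) ∧
    Set.InjOn (frakF φ) (scShift X φ) ∧
    ∀ x ∈ scShift X φ, frakF φ (x ∘ φ) =
      (fun y : Quotient (genSetoid φ) → X => y ∘ phiTilde φ) (frakF φ x) :=  by
  have hconst := scShift_const (X := X) φ
  refine ⟨hconst, ?_, ?_⟩
  · intro x hx x' hx' h
    funext a
    have h1 : x a = x (Quotient.mk (genSetoid φ) a).out :=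
      hconst x hx _ _ ((genSetoid φ).symm (Quotient.mk_out a))
    have h2 : x' a = x' (Quotient.mk (genSetoid φ) a).out :=
      hconst x' hx' _ _ ((genSetoid φ).symm (Quotient.mk_out a))
    rw [h1, h2]
    exact congrFun h _
  · intro x hx
    funext c
    show x (φ c.out) = x (phiTilde φ c).out
    refine hconst x hx _ _ ?_
    have : phiTilde φ c = Quotient.mk (genSetoid φ) (φ c.out) := by
      conv_lhs => rw [← Quotient.out_eq c]
      rfl
    rw [this]
    exact (genSetoid φ).symm (Quotient.mk_out _)
end

section
/- Let X have at least two elements and φ : Γ → Γ be such that σ_φ is finite fibre. Then the induced generalized shift σ_{φ̃} : X^(Γ/ℜ) → X^(Γ/ℜ) is also finite fibre, where φ̃ : Γ/ℜ → Γ/ℜ is the map induced by φ on the quotient by the relation α ℜ β ⟺ ∃n ≥ 1, φⁿ(α) = φⁿ(β). -/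
variable {Γ : Type*}

/-- If the generalized shift `σ_φ : X^Γ → X^Γ` is finite fibre, then so is the induced
generalized shift `σ_{φ̃} : X^(Γ/ℜ) → X^(Γ/ℜ)`. -/
theorem genShift_quotient_finiteFibre {X : Type*} [Nontrivial X] [Nonempty Γ] (φ : Γ → Γ)
    (h : ∀ y : Γ → X, {x : Γ → X | x ∘ φ = y}.Finite) :
    ∀ y : Quotient (genSetoid φ) → X,
      {x : Quotient (genSetoid φ) → X | x ∘ phiTilde φ = y}.Finite := by
  intro y
  set f : (Quotient (genSetoid φ) → X) → (Γ → X) := fun x => x ∘ Quotient.mk'' with hf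
  have hinj : Function.Injective f := by
    intro a b hab
    funext q
    induction q using Quotient.inductionOn' with
    | h g => exact congrFun hab g
  have himg : f '' {x : Quotient (genSetoid φ) → X | x ∘ phiTilde φ = y}
      ⊆ {x : Γ → X | x ∘ φ = y ∘ Quotient.mk''} := by
    rintro _ ⟨x, hx, rfl⟩
    funext g
    have : phiTilde φ (Quotient.mk'' g) = Quotient.mk'' (φ g) := rfl
    calc (f x ∘ φ) g = x (phiTilde φ (Quotient.mk'' g)) := by rw [this]; rfl
      _ = y (Quotient.mk'' g) := congrFun hx _
  exact Set.Finite.of_finite_image ((h (y ∘ Quotient.mk'')).subset himg) hinj.injOn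
end

section
/- Let X have at least two elements and ψ : Γ → Γ be injective with at least one non-periodic point θ (ψⁿ(θ) ≠ θ for all n ≥ 1). Then the infinite anti-orbit number of σ_ψ is infinite: for every k there exist k pairwise disjoint infinite σ_ψ-anti-orbit sequences in X^Γ. -/
/-- If `ψ : Γ → Γ` is injective with a non-periodic point, then the infinite anti-orbit
number of `σ_ψ` is infinite: for every `k` there exist `k` pairwise disjoint injective
`σ_ψ`-anti-orbit sequences in `X^Γ`. -/
theorem genShift_antiOrbitNumber_infinite {X Γ : Type*} [Nontrivial X] (ψ : Γ → Γ)
    (hinj : Function.Injective ψ) (θ : Γ) (hθ : ∀ n : ℕ, 1 ≤ n → ψ^[n] θ ≠ θ) :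
    ∀ k : ℕ, ∃ z : Fin k → ℕ → (Γ → X),
      (∀ i, Function.Injective (z i)) ∧
      (∀ i n, (z i (n + 1)) ∘ ψ = z i n) ∧
      ∀ i j, i ≠ j → Disjoint (Set.range (z i)) (Set.range (z j)) := by
  classical
  obtain ⟨a, b, hab⟩ := exists_pair_ne X
  -- points on the forward orbit of θ are pairwise distinct
  have horb : ∀ m m' : ℕ, ψ^[m] θ = ψ^[m'] θ → m = m' := by
    have key : ∀ m m' : ℕ, m ≤ m' → ψ^[m] θ = ψ^[m'] θ → m = m' := by
      intro m m' hle h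
      have h1 : ψ^[m] (ψ^[m' - m] θ) = ψ^[m] θ := by
        rw [← Function.iterate_add_apply, Nat.add_sub_cancel' hle]
        exact h.symm
      have h2 := (hinj.iterate m) h1
      by_contra hne
      exact hθ (m' - m) (by omega) h2
    intro m m' h
    rcases le_total m m' with hle | hle
    · exact key m m' hle h
    · exact (key m' m hle h.symm).symm
  intro k
  set w : Fin k → ℤ → X := fun i t => if t = 0 ∨ t = (i : ℤ) + 1 then b else a with hw
  set z : Fin k → ℕ → (Γ → X) := fun i n γ =>
    if h : ∃ m : ℕ, ψ^[m] θ = γ then w i ((h.choose : ℤ) - n) else a with hz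
  -- value on the orbit
  have hzval : ∀ (i : Fin k) (n m : ℕ), z i n (ψ^[m] θ) = w i ((m : ℤ) - n) := by
    intro i n m
    have h : ∃ m' : ℕ, ψ^[m'] θ = ψ^[m] θ := ⟨m, rfl⟩
    have hch : h.choose = m := horb _ _ h.choose_spec
    simp only [hz, dif_pos h, hch]
  have hwb : ∀ (i : Fin k) (t : ℤ), w i t = b ↔ (t = 0 ∨ t = (i : ℤ) + 1) := by
    intro i t
    simp only [hw]
    split
    · simpa using ‹_›
    · simp [hab, ‹¬_›]
  refine ⟨z, ?_, ?_, ?_⟩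
  · -- injectivity of each sequence
    intro i n n' h
    have e1 : z i n (ψ^[n] θ) = z i n' (ψ^[n] θ) := by rw [h]
    have e2 : z i n (ψ^[n'] θ) = z i n' (ψ^[n'] θ) := by rw [h]
    rw [hzval, hzval] at e1 e2
    have b1 : w i ((n : ℤ) - n) = b := by rw [hwb]; left; ring
    have b2 : w i ((n' : ℤ) - n') = b := by rw [hwb]; left; ring
    have c1 := (hwb i _).mp (e1 ▸ b1)
    have c2 := (hwb i _).mp (e2.symm ▸ b2)
    omega
  · -- anti-orbit property
    intro i n
    funext γ
    simp only [Function.comp_apply]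
    by_cases h : ∃ m : ℕ, ψ^[m] θ = γ
    · obtain ⟨m, rfl⟩ := h
      have : ψ (ψ^[m] θ) = ψ^[m + 1] θ := (Function.iterate_succ_apply' ψ m θ).symm
      rw [this, hzval, hzval]
      congr 1
      push_cast
      ring
    · have hγ : z i n γ = a := by simp only [hz, dif_neg h]
      rw [hγ]
      by_cases h' : ∃ m : ℕ, ψ^[m] θ = ψ γ
      · obtain ⟨m, hm⟩ := h'
        rcases Nat.eq_zero_or_pos m with rfl | hpos
        · -- ψ γ = θ ; value is w i (0 - (n+1)) = a
          rw [← hm, hzval]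
          simp only [hw]
          rw [if_neg]
          push_cast
          omega
        · exfalso
          apply h
          refine ⟨m - 1, hinj ?_⟩
          rw [← Function.iterate_succ_apply' ψ (m - 1) θ]
          have hm1 : (m - 1).succ = m := by omega
          rw [hm1, hm]
      · simp only [hz, dif_neg h']
  · -- disjointness
    intro i j hij
    rw [Set.disjoint_left]
    rintro x ⟨n, rfl⟩ ⟨n', hn'⟩
    have h : z i n = z j n' := hn'.symm  -- careful with direction
    have e1 : z i n (ψ^[n] θ) = z j n' (ψ^[n] θ) := by rw [h]
    have e2 : z i n (ψ^[n'] θ) = z j n' (ψ^[n'] θ) := by rw [h]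
    rw [hzval, hzval] at e1 e2
    have b1 : w i ((n : ℤ) - n) = b := by rw [hwb]; left; ring
    have b2 : w j ((n' : ℤ) - n') = b := by rw [hwb]; left; ring
    have c1 := (hwb j _).mp (e1 ▸ b1)
    have c2 := (hwb i _).mp (e2.symm ▸ b2)
    have hnn' : n = n' := by omega
    subst hnn'
    have e3 : z i n (ψ^[n + (i : ℕ) + 1] θ) = z j n (ψ^[n + (i : ℕ) + 1] θ) := by rw [h]
    rw [hzval, hzval] at e3
    have b3 : w i (((n + (i : ℕ) + 1 : ℕ) : ℤ) - n) = b := by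
      rw [hwb]; right; push_cast; ring
    have c3 := (hwb j _).mp (e3 ▸ b3)
    have : (i : ℕ) = (j : ℕ) := by omega
    exact hij (Fin.ext this)
end
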